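/- Let x ∈ L²(Ω, ℝ^m) and let z_0, …, z_p be pairwise uncorrelated random vectors with z_j ∈ L²(Ω, ℝ^{q_j}). For j = 0, …, p, let A_j = E_{x z_j}(E_{z_j z_j}^{1/2})^†. Then the error ε^{(p)}_{GH} = min over G_j ∈ ℝ^{m×r_j}, H_j ∈ ℝ^{r_j×q_j} (j = 0,…,p) of ‖x − Σ_{j=0}^p G_j H_j z_j‖²_Ω satisfies the lower bound ε^{(p)}_{GH} ≥ tr(E_{xx} − Σ_{j=0}^{p} A_j A_j^T). -/

import Mathlib

open MeasureTheory Matrix Finset Filter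

noncomputable section

/-- The covariance matrix `E_{xy}` of two random vectors. -/
def covM {Ω : Type} [MeasurableSpace Ω] (μ : Measure Ω) {m n : ℕ}
    (x : Ω → Fin m → ℝ) (y : Ω → Fin n → ℝ) : Matrix (Fin m) (Fin n) ℝ :=
  Matrix.of fun i j => ∫ ω, x ω i * y ω j ∂μ

/-- The squared norm `‖x‖²_Ω` of a random vector. -/
def sqnormOm {Ω : Type} [MeasurableSpace Ω] (μ : Measure Ω) {m : ℕ}
    (x : Ω → Fin m → ℝ) : ℝ :=
  ∫ ω, ∑ j, (x ω j) ^ 2 ∂μ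

/-- The Moore–Penrose conditions. -/
def IsMoorePenrose {m n : ℕ} (A : Matrix (Fin m) (Fin n) ℝ)
    (B : Matrix (Fin n) (Fin m) ℝ) : Prop :=
  A * B * A = A ∧ B * A * B = B ∧ (A * B)ᵀ = A * B ∧ (B * A)ᵀ = B * A

/-- The Moore–Penrose pseudoinverse `M^†`. -/
def mpinv {m n : ℕ} (A : Matrix (Fin m) (Fin n) ℝ) : Matrix (Fin n) (Fin m) ℝ :=
  Classical.epsilon fun B => IsMoorePenrose A B

/-- The symmetric positive semidefinite square root `M^{1/2}` of a PSD matrix. -/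
def msqrtM {n : ℕ} (M : Matrix (Fin n) (Fin n) ℝ) : Matrix (Fin n) (Fin n) ℝ :=
  Classical.epsilon fun S => S.PosSemidef ∧ S * S = M

/-- Squared Frobenius norm. -/
def frobSq {m n : ℕ} (A : Matrix (Fin m) (Fin n) ℝ) : ℝ := ∑ i, ∑ j, (A i j) ^ 2

/-- `(u, v, σ)` is a singular value decomposition of `A`:
`A = ∑ k σ_k u_k v_kᵀ` with orthonormal `u`'s and `v`'s and
nonnegative singular values in decreasing order. -/
def IsSVDOf {m n : ℕ} (A : Matrix (Fin m) (Fin n) ℝ)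
    (u : ℕ → Fin m → ℝ) (v : ℕ → Fin n → ℝ) (σ : ℕ → ℝ) : Prop :=
  (∀ k l, k < min m n → l < min m n → u k ⬝ᵥ u l = if k = l then (1 : ℝ) else 0) ∧
  (∀ k l, k < min m n → l < min m n → v k ⬝ᵥ v l = if k = l then (1 : ℝ) else 0) ∧
  (∀ k, 0 ≤ σ k) ∧ Antitone σ ∧ (∀ k, min m n ≤ k → σ k = 0) ∧
  A = ∑ k ∈ Finset.range (min m n), σ k • vecMulVec (u k) (v k)

/-!
Write `B_j = G_j H_j` and `S_j = E_{z_j z_j}^{1/2}`. Since the `z_j` are uncorrelated, the error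
expands to `tr E_xx + Σ_j tr(B_j S_j² B_jᵀ - E_{x z_j} B_jᵀ - B_j E_{x z_j}ᵀ)`. The key identity is
`A_j S_j = E_{x z_j}`: `1 - S_j^† S_j` projects onto `ker S_j = ker E_{z_j z_j}`, and along a
direction `c` in that kernel `cᵀ z_j` vanishes almost surely, hence so does its correlation with
`x`. Completing the square then gives
`error = tr(E_xx - Σ_j A_j A_jᵀ) + Σ_j ‖B_j S_j - A_j‖²_F`.
-/

open scoped MatrixOrder

lemma cfc_mul_cfc {n : Type*} [Fintype n] [DecidableEq n] (S : Matrix n n ℝ) (f g : ℝ → ℝ) :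
    cfc f S * cfc g S = cfc (fun t => f t * g t) S :=
  (cfc_mul f g S (S.finite_real_spectrum.continuousOn f)
    (S.finite_real_spectrum.continuousOn g)).symm

lemma transpose_cfc {n : Type*} [Fintype n] [DecidableEq n] (S : Matrix n n ℝ) (f : ℝ → ℝ) :
    (cfc f S)ᵀ = cfc f S := by
  rw [← conjTranspose_eq_transpose_of_trivial]
  exact (cfc_predicate f S).star_eq

lemma isMoorePenrose_cfc {n : ℕ} (S : Matrix (Fin n) (Fin n) ℝ)
    {f g : ℝ → ℝ} (hfgf : ∀ t, f t * g t * f t = f t) (hgfg : ∀ t, g t * f t * g t = g t) :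
    IsMoorePenrose (cfc f S) (cfc g S) := by
  simp only [IsMoorePenrose, cfc_mul_cfc, transpose_cfc, hfgf, hgfg, and_self]

-- Inverting the eigenvalues of `S` with the convention `0⁻¹ = 0` yields its pseudoinverse.
lemma isMoorePenrose_mpinv {n : ℕ} {S : Matrix (Fin n) (Fin n) ℝ} (hS : S.IsHermitian) :
    IsMoorePenrose S (mpinv S) := by
  have h := isMoorePenrose_cfc S (f := fun t => t) (g := (·⁻¹)) mul_inv_mul_cancel
    (fun t => by simpa using mul_inv_mul_cancel t⁻¹)
  rw [cfc_id' ℝ S] at h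
  exact Classical.epsilon_spec ⟨_, h⟩

lemma msqrtM_spec {n : ℕ} {M : Matrix (Fin n) (Fin n) ℝ} (hM : M.PosSemidef) :
    (msqrtM M).PosSemidef ∧ msqrtM M * msqrtM M = M :=
  Classical.epsilon_spec (p := fun S => S.PosSemidef ∧ S * S = M)
    ⟨CFC.sqrt M, (CFC.sqrt_nonneg M).posSemidef, CFC.sqrt_mul_sqrt_self M hM.nonneg⟩

lemma neg_trace_mul_transpose_le {ι κ : Type*} [Fintype ι] [Fintype κ]
    (A B : Matrix ι κ ℝ) {S : Matrix κ κ ℝ} (hS : S.IsSymm) :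
    -(A * Aᵀ).trace ≤ (B * (S * S) * Bᵀ - A * S * Bᵀ - B * (A * S)ᵀ).trace := by
  have hsq : (B * S - A) * (B * S - A)ᵀ
      = B * (S * S) * Bᵀ - A * S * Bᵀ - B * (A * S)ᵀ + A * Aᵀ := by
    simp only [transpose_sub, transpose_mul, hS.eq, Matrix.sub_mul, Matrix.mul_sub,
      Matrix.mul_assoc]
    abel
  have h0 : 0 ≤ ((B * S - A) * (B * S - A)ᵀ).trace := by
    simpa using (posSemidef_self_mul_conjTranspose (B * S - A)).trace_nonneg
  rw [hsq, trace_add] at h0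
  linarith

section Covariance

variable {Ω : Type} [MeasurableSpace Ω] {μ : Measure Ω} {k m n : ℕ}

lemma integrable_coord_mul {x : Ω → Fin m → ℝ} {y : Ω → Fin n → ℝ}
    (hx : MemLp x 2 μ) (hy : MemLp y 2 μ) (i : Fin m) (j : Fin n) :
    Integrable (fun ω => x ω i * y ω j) μ :=
  (hx.eval i).integrable_mul (hy.eval j)

lemma MeasureTheory.MemLp.mulVec {x : Ω → Fin n → ℝ} (hx : MemLp x 2 μ)
    (B : Matrix (Fin m) (Fin n) ℝ) : MemLp (fun ω => B *ᵥ x ω) 2 μ :=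
  (LinearMap.toContinuousLinearMap (Matrix.mulVecLin B)).comp_memLp' hx

lemma covM_transpose (x : Ω → Fin m → ℝ) (y : Ω → Fin n → ℝ) :
    (covM μ x y)ᵀ = covM μ y x := by
  ext i j
  simp only [transpose_apply, covM, of_apply, mul_comm]

lemma covM_sub_left {x w : Ω → Fin m → ℝ} {y : Ω → Fin n → ℝ}
    (hx : MemLp x 2 μ) (hw : MemLp w 2 μ) (hy : MemLp y 2 μ) :
    covM μ (fun ω => x ω - w ω) y = covM μ x y - covM μ w y := by
  ext i j
  simp only [covM, of_apply, Matrix.sub_apply, Pi.sub_apply, sub_mul]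
  exact integral_sub (integrable_coord_mul hx hy i j) (integrable_coord_mul hw hy i j)

lemma covM_sum_left {ι : Type*} [Fintype ι] {w : ι → Ω → Fin m → ℝ} {y : Ω → Fin n → ℝ}
    (hw : ∀ j, MemLp (w j) 2 μ) (hy : MemLp y 2 μ) :
    covM μ (fun ω => ∑ j, w j ω) y = ∑ j, covM μ (w j) y := by
  ext i l
  simp only [covM, of_apply, Matrix.sum_apply, Finset.sum_apply, Finset.sum_mul]
  exact integral_finsetSum _ fun j _ => integrable_coord_mul (hw j) hy i l

lemma covM_mulVec_left {x : Ω → Fin n → ℝ} {y : Ω → Fin k → ℝ}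
    (hx : MemLp x 2 μ) (hy : MemLp y 2 μ) (B : Matrix (Fin m) (Fin n) ℝ) :
    covM μ (fun ω => B *ᵥ x ω) y = B * covM μ x y := by
  ext i l
  simp only [covM, of_apply, mul_apply, mulVec, dotProduct, Finset.sum_mul, mul_assoc]
  rw [integral_finsetSum _ fun j _ => (integrable_coord_mul hx hy j l).const_mul _]
  simp only [integral_const_mul]

lemma covM_sub_right {x : Ω → Fin m → ℝ} {y w : Ω → Fin n → ℝ}
    (hx : MemLp x 2 μ) (hy : MemLp y 2 μ) (hw : MemLp w 2 μ) :
    covM μ x (fun ω => y ω - w ω) = covM μ x y - covM μ x w := by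
  rw [← covM_transpose, covM_sub_left hy hw hx, transpose_sub, covM_transpose, covM_transpose]

lemma covM_sum_right {ι : Type*} [Fintype ι] {x : Ω → Fin m → ℝ} {w : ι → Ω → Fin n → ℝ}
    (hx : MemLp x 2 μ) (hw : ∀ j, MemLp (w j) 2 μ) :
    covM μ x (fun ω => ∑ j, w j ω) = ∑ j, covM μ x (w j) := by
  rw [← covM_transpose, covM_sum_left hw hx, transpose_sum]
  simp only [covM_transpose]

lemma covM_mulVec_right {x : Ω → Fin k → ℝ} {y : Ω → Fin n → ℝ}
    (hx : MemLp x 2 μ) (hy : MemLp y 2 μ) (B : Matrix (Fin m) (Fin n) ℝ) :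
    covM μ x (fun ω => B *ᵥ y ω) = covM μ x y * Bᵀ := by
  rw [← covM_transpose, covM_mulVec_left hy hx, transpose_mul, covM_transpose]

lemma sqnormOm_eq_trace_covM {x : Ω → Fin m → ℝ} (hx : MemLp x 2 μ) :
    sqnormOm μ x = (covM μ x x).trace := by
  simp only [sqnormOm, trace, Matrix.diag, covM, of_apply, sq]
  exact integral_finsetSum _ fun i _ => integrable_coord_mul hx hx i i

lemma covM_self_diag_nonneg (x : Ω → Fin n → ℝ) (i : Fin n) : 0 ≤ covM μ x x i i :=
  integral_nonneg fun ω => mul_self_nonneg (x ω i)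

lemma covM_posSemidef {x : Ω → Fin n → ℝ} (hx : MemLp x 2 μ) : (covM μ x x).PosSemidef := by
  refine posSemidef_iff_dotProduct_mulVec.mpr ⟨?_, fun c => ?_⟩
  · exact isHermitian_iff_isSymm.mpr (covM_transpose x x)
  · have h0 := covM_self_diag_nonneg (μ := μ) (fun ω => replicateRow (Fin 1) c *ᵥ x ω) 0
    rw [covM_mulVec_right (hx.mulVec _) hx, covM_mulVec_left hx hx] at h0
    rw [star_trivial, dotProduct_mulVec]
    simpa only [mul_apply, replicateRow_apply, transpose_apply, dotProduct, vecMul] using h0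

lemma covM_eq_zero_of_covM_self_eq_zero {x : Ω → Fin m → ℝ} {w : Ω → Fin n → ℝ}
    (hw : MemLp w 2 μ) (h : covM μ w w = 0) : covM μ x w = 0 := by
  ext i j
  have hwj : (fun ω => w ω j) =ᵐ[μ] 0 := by
    have h2 : ∫ ω, w ω j ^ 2 ∂μ = 0 := by simpa [covM, sq] using congrFun (congrFun h j) j
    filter_upwards [(integral_eq_zero_iff_of_nonneg (fun ω => sq_nonneg (w ω j))
      (hw.eval j).integrable_sq).mp h2] with ω hω
    simpa using hω
  simp only [covM, of_apply, Matrix.zero_apply]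
  exact integral_eq_zero_of_ae (hwj.mono fun ω hω => by simp [hω])

lemma covM_mul_mpinv_msqrtM_mul_msqrtM {x : Ω → Fin m → ℝ} {v : Ω → Fin n → ℝ}
    (hx : MemLp x 2 μ) (hv : MemLp v 2 μ) :
    covM μ x v * mpinv (msqrtM (covM μ v v)) * msqrtM (covM μ v v) = covM μ x v := by
  obtain ⟨hS, hSS⟩ := msqrtM_spec (covM_posSemidef hv)
  set S := msqrtM (covM μ v v)
  set N := 1 - mpinv S * S
  have hSPS : S * mpinv S * S = S := (isMoorePenrose_mpinv hS.1).1
  have hN : covM μ v v * N = 0 := by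
    rw [← hSS, Matrix.mul_sub, Matrix.mul_one, Matrix.mul_assoc S S,
      ← Matrix.mul_assoc S (mpinv S), hSPS, sub_self]
  have h : covM μ x (fun ω => Nᵀ *ᵥ v ω) = 0 := by
    refine covM_eq_zero_of_covM_self_eq_zero (hv.mulVec _) ?_
    rw [covM_mulVec_left hv (hv.mulVec _), covM_mulVec_right hv hv, transpose_transpose, hN,
      Matrix.mul_zero]
  rw [covM_mulVec_right hx hv, transpose_transpose, Matrix.mul_sub, Matrix.mul_one,
    sub_eq_zero] at h
  rw [Matrix.mul_assoc, ← h]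

variable {ι : Type*} [Fintype ι] {q : ι → ℕ} {z : ∀ j, Ω → Fin (q j) → ℝ}

lemma covM_sum_mulVec_self (hz : ∀ j, MemLp (z j) 2 μ)
    (huncorr : Pairwise fun i j => covM μ (z i) (z j) = 0)
    (B : ∀ j, Matrix (Fin m) (Fin (q j)) ℝ) :
    covM μ (fun ω => ∑ j, B j *ᵥ z j ω) (fun ω => ∑ j, B j *ᵥ z j ω)
      = ∑ j, B j * covM μ (z j) (z j) * (B j)ᵀ := by
  have hBz : ∀ j, MemLp (fun ω => B j *ᵥ z j ω) 2 μ := fun j => (hz j).mulVec _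
  rw [covM_sum_left hBz (memLp_finsetSum _ fun j _ => hBz j)]
  refine Finset.sum_congr rfl fun j _ => ?_
  rw [covM_sum_right (hBz j) hBz, Finset.sum_eq_single j]
  · rw [covM_mulVec_left (hz j) (hBz j), covM_mulVec_right (hz j) (hz j), Matrix.mul_assoc]
  · intro i _ hij
    rw [covM_mulVec_left (hz j) (hBz i), covM_mulVec_right (hz j) (hz i), huncorr hij.symm,
      Matrix.zero_mul, Matrix.mul_zero]
  · exact fun hj => (hj (Finset.mem_univ j)).elim

lemma sqnormOm_sub_sum_mulVec {x : Ω → Fin m → ℝ} (hx : MemLp x 2 μ)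
    (hz : ∀ j, MemLp (z j) 2 μ) (huncorr : Pairwise fun i j => covM μ (z i) (z j) = 0)
    (B : ∀ j, Matrix (Fin m) (Fin (q j)) ℝ) :
    sqnormOm μ (fun ω => x ω - ∑ j, B j *ᵥ z j ω)
      = (covM μ x x).trace + ∑ j, (B j * covM μ (z j) (z j) * (B j)ᵀ
          - covM μ x (z j) * (B j)ᵀ - B j * (covM μ x (z j))ᵀ).trace := by
  have hBz : ∀ j, MemLp (fun ω => B j *ᵥ z j ω) 2 μ := fun j => (hz j).mulVec _
  have hw : MemLp (fun ω => ∑ j, B j *ᵥ z j ω) 2 μ := memLp_finsetSum _ fun j _ => hBz j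
  have hxw : covM μ x (fun ω => ∑ j, B j *ᵥ z j ω) = ∑ j, covM μ x (z j) * (B j)ᵀ := by
    rw [covM_sum_right hx hBz]
    exact Finset.sum_congr rfl fun j _ => covM_mulVec_right hx (hz j) _
  have hd : MemLp (fun ω => x ω - ∑ j, B j *ᵥ z j ω) 2 μ := hx.sub hw
  rw [sqnormOm_eq_trace_covM hd, covM_sub_left hx hw hd, covM_sub_right hx hx hw,
    covM_sub_right hw hx hw, ← covM_transpose x (fun ω => ∑ j, B j *ᵥ z j ω), hxw,
    covM_sum_mulVec_self hz huncorr]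
  simp only [transpose_sum, transpose_mul, transpose_transpose, trace_sub, trace_sum,
    Finset.sum_sub_distrib]
  ring

end Covariance

theorem stmt9_general {Ω : Type} [MeasurableSpace Ω] (μ : Measure Ω)
    {m p : ℕ} (q r : Fin (p + 1) → ℕ) (x : Ω → Fin m → ℝ)
    (z : ∀ j, Ω → Fin (q j) → ℝ)
    (hx : MemLp x 2 μ) (hz : ∀ j, MemLp (z j) 2 μ)
    (huncorr : ∀ i j, i ≠ j → covM μ (z i) (z j) = 0)
    (A : ∀ j, Matrix (Fin m) (Fin (q j)) ℝ)
    (hA : ∀ j, A j = covM μ x (z j) * mpinv (msqrtM (covM μ (z j) (z j))))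
    (G : ∀ j, Matrix (Fin m) (Fin (r j)) ℝ)
    (H : ∀ j, Matrix (Fin (r j)) (Fin (q j)) ℝ) :
    (covM μ x x - ∑ j, A j * (A j)ᵀ).trace
      ≤ sqnormOm μ (fun ω => x ω - ∑ j, (G j * H j) *ᵥ z j ω) := by
  rw [sqnormOm_sub_sum_mulVec hx hz huncorr, trace_sub, trace_sum, sub_eq_add_neg,
    ← Finset.sum_neg_distrib]
  gcongr with j
  obtain ⟨hS, hSS⟩ := msqrtM_spec (covM_posSemidef (hz j))
  have hAS : A j * msqrtM (covM μ (z j) (z j)) = covM μ x (z j) := by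
    rw [hA j, covM_mul_mpinv_msqrtM_mul_msqrtM hx (hz j)]
  rw [← hSS, ← hAS]
  exact neg_trace_mul_transpose_le _ _ (isHermitian_iff_isSymm.mp hS.1)

/-- the lower bound
`ε^{(p)}_{GH} ≥ tr(E_{xx} − Σ_j A_j A_jᵀ)` where `A_j = E_{xz_j}(E_{z_jz_j}^{1/2})^†`;
equivalently, every admissible choice of `G_j, H_j` gives an error at least this. -/
theorem stmt9 {Ω : Type} [MeasurableSpace Ω] (μ : Measure Ω) [IsProbabilityMeasure μ]
    {m p : ℕ} (q r : Fin (p + 1) → ℕ) (x : Ω → Fin m → ℝ)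
    (z : ∀ j, Ω → Fin (q j) → ℝ)
    (hx : MemLp x 2 μ) (hz : ∀ j, MemLp (z j) 2 μ)
    (huncorr : ∀ i j, i ≠ j → covM μ (z i) (z j) = 0)
    (A : ∀ j, Matrix (Fin m) (Fin (q j)) ℝ)
    (hA : ∀ j, A j = covM μ x (z j) * mpinv (msqrtM (covM μ (z j) (z j))))
    (G : ∀ j, Matrix (Fin m) (Fin (r j)) ℝ)
    (H : ∀ j, Matrix (Fin (r j)) (Fin (q j)) ℝ) :
    (covM μ x x - ∑ j, A j * (A j)ᵀ).trace
      ≤ sqnormOm μ (fun ω => x ω - ∑ j, (G j * H j) *ᵥ z j ω) :=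
  stmt9_general μ q r x z hx hz huncorr A hA G H
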